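/- With H = H₀ + P D P† as above, for i ≠ j and M_{i,j} the matrix whose sole nonzero entry is the (i,j)-th (equal to 1), the only possibly nonzero entry of the matrix E[G_H(z₁) M_{i,j} G_H(z₂)] is the (i,j)-th one, for z₁, z₂ with moduli larger than ‖H₀‖ + ‖D‖. -/

import Mathlib

/-!
Left multiplication of `P` by a diagonal unitary `U = diagonal u` conjugates `H` by `U`, since
`U` commutes with `H₀`; hence it conjugates both resolvents, and the `(a, b)` entry of
`G(z₁) M_{i,j} G(z₂)` picks up the phase `u a * conj (u i) * u j * conj (u b)`. Haar measure
is invariant under this translation, so the expectation of that entry equals itself times the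
phase. For `(a, b) ≠ (i, j)` and `i ≠ j`, putting a single `I` on the diagonal (at `j` if
`b ≠ j`, at `i` otherwise) makes the phase different from `1`, forcing the expectation to vanish.
-/

open MeasureTheory
open scoped Matrix

noncomputable local instance matrixMeasurableSpace {N : ℕ} : MeasurableSpace (Matrix (Fin N) (Fin N) ℂ) :=
  MeasurableSpace.pi

noncomputable local instance matrixTopologicalSpace {N : ℕ} : TopologicalSpace (Matrix (Fin N) (Fin N) ℂ) :=
  Pi.topologicalSpace

instance {N : ℕ} : BorelSpace (Matrix (Fin N) (Fin N) ℂ) := Pi.borelSpace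

instance {N : ℕ} : ContinuousMul (Matrix (Fin N) (Fin N) ℂ) :=
  ⟨continuous_fst.matrix_mul continuous_snd⟩

theorem integral_eq_zero_of_mul_left_eq_smul {G E 𝕜 : Type*} [MeasurableSpace G] [Group G]
    [MeasurableMul G] [NormedAddCommGroup E] [NormedSpace ℝ E] [NormedField 𝕜]
    [NormedSpace 𝕜 E] [SMulCommClass ℝ 𝕜 E] {μ : Measure G} [μ.IsMulLeftInvariant]
    {f : G → E} {g : G} {c : 𝕜} (hc : c ≠ 1) (hf : ∀ x, f (g * x) = c • f x) :
    ∫ x, f x ∂μ = 0 := by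
  have hfix : ∫ x, f x ∂μ = c • ∫ x, f x ∂μ := by
    rw [← integral_smul, ← integral_mul_left_eq_self f g]
    simp_rw [hf]
  have : (1 - c) • ∫ x, f x ∂μ = 0 := by rw [sub_smul, one_smul, ← hfix, sub_self]
  exact (smul_eq_zero.mp this).resolve_left (sub_ne_zero.mpr hc.symm)

namespace Matrix

theorem diagonal_mul_single_mul_diagonal {n α : Type*} [Fintype n] [DecidableEq n]
    [CommSemiring α] (u v : n → α) (i j : n) (c : α) :
    diagonal u * single i j c * diagonal v = (u i * v j) • single i j c := by
  ext a b
  simp only [mul_diagonal, diagonal_mul, single_apply, smul_apply, smul_eq_mul]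
  split_ifs with h
  · obtain ⟨rfl, rfl⟩ := h
    ring
  · simp

variable {n α : Type*} [Fintype n] [DecidableEq n] [CommRing α] [StarRing α]

theorem diagonal_mem_unitaryGroup {u : n → α} (hu : ∀ k, u k ∈ unitary α) :
    diagonal u ∈ unitaryGroup n α := by
  rw [mem_unitaryGroup_iff, star_eq_conjTranspose, diagonal_conjTranspose,
    diagonal_mul_diagonal, ← diagonal_one]
  exact congrArg diagonal (funext fun k => Unitary.mul_star_self_of_mem (hu k))

-- No invertibility is needed: `Matrix.inv` sends singular matrices to `0`, on both sides.
theorem conj_inv_of_mem_unitaryGroup {U : Matrix n n α} (hU : U ∈ unitaryGroup n α)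
    (M : Matrix n n α) : (U * M * Uᴴ)⁻¹ = U * M⁻¹ * Uᴴ := by
  have hUU : U * Uᴴ = 1 := mem_unitaryGroup_iff.mp hU
  have hUU' : Uᴴ * U = 1 := mem_unitaryGroup_iff'.mp hU
  rw [mul_inv_rev, mul_inv_rev, inv_eq_left_inv hUU, inv_eq_left_inv hUU', Matrix.mul_assoc]

theorem add_conj_sub_smul_one {U A : Matrix n n α} (hU : U ∈ unitaryGroup n α)
    (hUA : Commute U A) (X : Matrix n n α) (z : α) :
    A + U * X * Uᴴ - z • 1 = U * (A + X - z • 1) * Uᴴ := by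
  have hUU : U * Uᴴ = 1 := mem_unitaryGroup_iff.mp hU
  rw [Matrix.mul_sub, Matrix.mul_add, Matrix.sub_mul, Matrix.add_mul, hUA.eq, Matrix.mul_assoc A,
    hUU, Matrix.mul_one, Matrix.mul_smul, Matrix.mul_one, Matrix.smul_mul, hUU]

/-- `(G(z₁) M_{i,j} G(z₂))` for the resolvent `G(z) = (A + P X Pᴴ - z)⁻¹`. -/
noncomputable def resolventSandwich (A X : Matrix n n α) (z₁ z₂ : α) (i j : n)
    (P : Matrix n n α) : Matrix n n α :=
  (A + P * X * Pᴴ - z₁ • 1)⁻¹ * single i j 1 * (A + P * X * Pᴴ - z₂ • 1)⁻¹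

theorem resolventSandwich_diagonal_mul_apply {A : Matrix n n α} {u : n → α}
    (hu : diagonal u ∈ unitaryGroup n α) (hA : Commute (diagonal u) A) (X : Matrix n n α)
    (z₁ z₂ : α) (i j : n) (P : Matrix n n α) (a b : n) :
    resolventSandwich A X z₁ z₂ i j (diagonal u * P) a b =
      (u a * star (u i) * u j * star (u b)) * resolventSandwich A X z₁ z₂ i j P a b := by
  set U := diagonal u
  have hUstar : Uᴴ = diagonal (star u) := diagonal_conjTranspose u
  have hconj : ∀ z : α, (A + U * P * X * (U * P)ᴴ - z • 1)⁻¹ =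
      U * (A + P * X * Pᴴ - z • 1)⁻¹ * Uᴴ := by
    intro z
    rw [show U * P * X * (U * P)ᴴ = U * (P * X * Pᴴ) * Uᴴ by
        simp only [conjTranspose_mul, Matrix.mul_assoc],
      add_conj_sub_smul_one hu hA, conj_inv_of_mem_unitaryGroup hu]
  have hreassoc : ∀ G₁ G₂ : Matrix n n α,
      U * G₁ * Uᴴ * single i j 1 * (U * G₂ * Uᴴ) =
        U * (G₁ * (Uᴴ * single i j 1 * U) * G₂) * Uᴴ := by
    simp only [Matrix.mul_assoc, implies_true]
  simp only [resolventSandwich, hconj, hreassoc]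
  rw [hUstar, diagonal_mul_single_mul_diagonal, Matrix.mul_smul, Matrix.smul_mul,
    Matrix.mul_smul, Matrix.smul_mul, smul_apply, mul_diagonal, diagonal_mul, smul_eq_mul]
  simp only [Pi.star_apply]
  ring

end Matrix

open Matrix in
theorem exists_diagonal_unitary_phase_ne_one {n : Type*} [Fintype n] [DecidableEq n]
    {i j a b : n} (hij : i ≠ j) (hab : (a, b) ≠ (i, j)) :
    ∃ u : n → ℂ,
      diagonal u ∈ unitaryGroup n ℂ ∧ u a * star (u i) * u j * star (u b) ≠ 1 := by
  have phase_mem : ∀ k₀ k : n, (if k = k₀ then Complex.I else 1) ∈ unitary ℂ := by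
    intro k₀ k
    split_ifs
    · simp [Unitary.mem_iff_star_mul_self]
    · exact one_mem _
  by_cases hb : b = j
  · subst hb
    have ha : a ≠ i := fun ha => hab (by rw [ha])
    refine ⟨_, diagonal_mem_unitaryGroup (phase_mem i), ?_⟩
    simp [ha, Ne.symm hij, Complex.ext_iff]
  · refine ⟨_, diagonal_mem_unitaryGroup (phase_mem j), ?_⟩
    by_cases ha : a = j <;> norm_num [ha, hb, hij, Complex.ext_iff]

theorem stmt15_general {N : ℕ} (μ : Measure (Matrix.unitaryGroup (Fin N) ℂ))
    [μ.IsHaarMeasure]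
    (d₀ dD : Fin N → ℝ) (i j : Fin N) (hij : i ≠ j) (z₁ z₂ : ℂ) :
    ∀ a b : Fin N, (a, b) ≠ (i, j) →
      ∫ P : Matrix.unitaryGroup (Fin N) ℂ,
          ((((Matrix.diagonal fun l => (d₀ l : ℂ)) +
                (P : Matrix (Fin N) (Fin N) ℂ) * (Matrix.diagonal fun l => (dD l : ℂ)) *
                  (P : Matrix (Fin N) (Fin N) ℂ)ᴴ -
                z₁ • (1 : Matrix (Fin N) (Fin N) ℂ))⁻¹ *
              Matrix.single i j (1 : ℂ) *
            ((Matrix.diagonal fun l => (d₀ l : ℂ)) +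
                (P : Matrix (Fin N) (Fin N) ℂ) * (Matrix.diagonal fun l => (dD l : ℂ)) *
                  (P : Matrix (Fin N) (Fin N) ℂ)ᴴ -
                z₂ • (1 : Matrix (Fin N) (Fin N) ℂ))⁻¹) a b) ∂μ = 0 := by
  intro a b hab
  obtain ⟨u, hu, hphase⟩ := exists_diagonal_unitary_phase_ne_one hij hab
  exact integral_eq_zero_of_mul_left_eq_smul (g := ⟨_, hu⟩) hphase fun P =>
    Matrix.resolventSandwich_diagonal_mul_apply hu (Matrix.commute_diagonal _ _) _ _ _ _ _ P a b

/-- With `H = H₀ + P D P†` (`P` Haar unitary, `H₀` Hermitian diagonal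
with diagonal `d₀`, `D` real diagonal with diagonal `dD`), for `i ≠ j` and `M_{i,j}` the
matrix whose sole nonzero entry is the `(i,j)`-th (equal to `1`), the only possibly
nonzero entry of `E[G_H(z₁) M_{i,j} G_H(z₂)]` is the `(i,j)`-th one, for `z₁, z₂ ∈ ℂ \ ℝ`
of modulus larger than `‖H₀‖ + ‖D‖`. -/
theorem stmt15 {N : ℕ} (μ : Measure (Matrix.unitaryGroup (Fin N) ℂ))
    [IsProbabilityMeasure μ] [μ.IsHaarMeasure]
    (d₀ dD : Fin N → ℝ) (i j : Fin N) (hij : i ≠ j) (z₁ z₂ : ℂ)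
    (hz₁ : z₁.im ≠ 0) (hz₂ : z₂.im ≠ 0)
    (hlarge₁ : (⨆ n, |d₀ n|) + (⨆ n, |dD n|) < ‖z₁‖)
    (hlarge₂ : (⨆ n, |d₀ n|) + (⨆ n, |dD n|) < ‖z₂‖) :
    ∀ a b : Fin N, (a, b) ≠ (i, j) →
      ∫ P : Matrix.unitaryGroup (Fin N) ℂ,
          ((((Matrix.diagonal fun l => (d₀ l : ℂ)) +
                (P : Matrix (Fin N) (Fin N) ℂ) * (Matrix.diagonal fun l => (dD l : ℂ)) *
                  (P : Matrix (Fin N) (Fin N) ℂ)ᴴ -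
                z₁ • (1 : Matrix (Fin N) (Fin N) ℂ))⁻¹ *
              Matrix.single i j (1 : ℂ) *
            ((Matrix.diagonal fun l => (d₀ l : ℂ)) +
                (P : Matrix (Fin N) (Fin N) ℂ) * (Matrix.diagonal fun l => (dD l : ℂ)) *
                  (P : Matrix (Fin N) (Fin N) ℂ)ᴴ -
                z₂ • (1 : Matrix (Fin N) (Fin N) ℂ))⁻¹) a b) ∂μ = 0 :=
  stmt15_general μ d₀ dD i j hij z₁ z₂
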